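/- arXiv:2503.12647 — 2 statements merged into one kernel-verified Lean document; each statement's English description precedes it below -/
import Mathlib

section
/- Let A and B be real symmetric positive definite n×n matrices, let w be a unit eigenvector of R = A^(−1/2) B A^(−1/2) corresponding to its smallest eigenvalue, let β ≠ 0, and set Z* = β · A^(−1/2) w. Then Z* is Pareto optimal for the multi-objective problem of simultaneously maximizing ZᵀAZ and minimizing ZᵀBZ: there exists no Z ∈ ℝⁿ with ZᵀAZ ≥ Z*ᵀAZ* and ZᵀBZ < Z*ᵀBZ*. -/
/-!
In the whitened coordinates `y = A^(1/2) Z` the two objectives become `‖y‖²` and the Rayleigh form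
`yᵀ R y`, and `Z⋆` becomes `β w`. Since `R ≥ λ_min · 1` and `λ_min ≥ 0`, any `y` with
`‖y‖² ≥ ‖β w‖²` has `yᵀ R y ≥ λ_min ‖y‖² ≥ λ_min ‖β w‖² = (β w)ᵀ R (β w)`.
-/

open Matrix

namespace Matrix

variable {ι : Type*} [Fintype ι]

theorem dotProduct_transpose_mul_mul_mulVec (M S : Matrix ι ι ℝ) (x : ι → ℝ) :
    x ⬝ᵥ ((Sᵀ * M * S) *ᵥ x) = (S *ᵥ x) ⬝ᵥ (M *ᵥ (S *ᵥ x)) := by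
  rw [← mulVec_mulVec, ← mulVec_mulVec, dotProduct_mulVec, vecMul_transpose]

theorem PosSemidef.nonneg_of_mulVec_eq_smul {R : Matrix ι ι ℝ} (hR : R.PosSemidef) {μ : ℝ}
    {v : ι → ℝ} (hv : v ≠ 0) (hμ : R *ᵥ v = μ • v) : 0 ≤ μ := by
  have hvv : 0 < v ⬝ᵥ v := by simpa using dotProduct_star_self_pos_iff.2 hv
  have hRv := hR.dotProduct_mulVec_nonneg v
  rw [star_trivial, hμ, dotProduct_smul, smul_eq_mul] at hRv
  exact nonneg_of_mul_nonneg_left hRv hvv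

variable [DecidableEq ι]

theorem IsHermitian.posSemidef_sub_smul_one {R : Matrix ι ι ℝ} (hR : R.IsHermitian) {l : ℝ}
    (hl : l ∈ lowerBounds {μ : ℝ | ∃ v : ι → ℝ, v ≠ 0 ∧ R *ᵥ v = μ • v}) :
    (R - l • 1).PosSemidef := by
  have hM : (R - l • 1).IsHermitian := hR.sub (isHermitian_one.smul (IsSelfAdjoint.all l))
  refine hM.posSemidef_iff_eigenvalues_nonneg.2 fun i => ?_
  set b := (hM.eigenvectorBasis i).ofLp
  have hb : b ≠ 0 := by simpa [b] using hM.eigenvectorBasis.orthonormal.ne_zero i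
  have hRb : R *ᵥ b = (hM.eigenvalues i + l) • b := by
    have hMb := hM.mulVec_eigenvectorBasis i
    rw [sub_mulVec, smul_mulVec, one_mulVec, sub_eq_iff_eq_add] at hMb
    rw [add_smul, hMb]
  simpa using hl ⟨b, hb, hRb⟩

theorem IsHermitian.mul_dotProduct_self_le {R : Matrix ι ι ℝ} (hR : R.IsHermitian) {l : ℝ}
    (hl : l ∈ lowerBounds {μ : ℝ | ∃ v : ι → ℝ, v ≠ 0 ∧ R *ᵥ v = μ • v}) (y : ι → ℝ) :
    l * (y ⬝ᵥ y) ≤ y ⬝ᵥ (R *ᵥ y) := by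
  have hy := (hR.posSemidef_sub_smul_one hl).dotProduct_mulVec_nonneg y
  rw [star_trivial, sub_mulVec, smul_mulVec, one_mulVec, dotProduct_sub, dotProduct_smul,
    smul_eq_mul] at hy
  linarith

theorem PosSemidef.dotProduct_mulVec_le_of_isLeast {R : Matrix ι ι ℝ} (hR : R.PosSemidef)
    {l : ℝ} (hl : IsLeast {μ : ℝ | ∃ v : ι → ℝ, v ≠ 0 ∧ R *ᵥ v = μ • v} l)
    {x y : ι → ℝ} (hx : R *ᵥ x = l • x) (hxy : x ⬝ᵥ x ≤ y ⬝ᵥ y) :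
    x ⬝ᵥ (R *ᵥ x) ≤ y ⬝ᵥ (R *ᵥ y) := by
  obtain ⟨⟨v, hv, hRv⟩, hl_le⟩ := hl
  have hl0 : 0 ≤ l := hR.nonneg_of_mulVec_eq_smul hv hRv
  calc x ⬝ᵥ (R *ᵥ x) = l * (x ⬝ᵥ x) := by rw [hx, dotProduct_smul, smul_eq_mul]
    _ ≤ l * (y ⬝ᵥ y) := mul_le_mul_of_nonneg_left hxy hl0
    _ ≤ y ⬝ᵥ (R *ᵥ y) := hR.1.mul_dotProduct_self_le hl_le y

end Matrix

theorem stmt_5_general {n : ℕ} (A B : Matrix (Fin n) (Fin n) ℝ)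
    (hB : B.PosDef)
    (S : Matrix (Fin n) (Fin n) ℝ) (hS : S.PosDef) (hSA : S * S = A)
    (R : Matrix (Fin n) (Fin n) ℝ) (hR : R = S⁻¹ * B * S⁻¹)
    (lmin : ℝ)
    (hlmin : IsLeast {μ : ℝ | ∃ v : Fin n → ℝ, v ≠ 0 ∧ R *ᵥ v = μ • v} lmin)
    (w : Fin n → ℝ) (hweig : R *ᵥ w = lmin • w)
    (β : ℝ)
    (Zs : Fin n → ℝ) (hZs : Zs = β • (S⁻¹ *ᵥ w)) :
    ¬ ∃ Z : Fin n → ℝ,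
        Zs ⬝ᵥ (A *ᵥ Zs) ≤ Z ⬝ᵥ (A *ᵥ Z) ∧ Z ⬝ᵥ (B *ᵥ Z) < Zs ⬝ᵥ (B *ᵥ Zs) := by
  rintro ⟨Z, hZA, hZB⟩
  have hSdet : IsUnit S.det := (isUnit_iff_isUnit_det S).1 hS.isUnit
  have hSt : Sᵀ = S := hS.1.eq
  have hA : A = Sᵀ * 1 * S := by rw [hSt, Matrix.mul_one, hSA]
  have hB' : B = Sᵀ * R * S := by
    rw [hSt, hR, Matrix.mul_assoc, Matrix.mul_assoc, nonsing_inv_mul S hSdet, Matrix.mul_one,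
      mul_nonsing_inv_cancel_left S B hSdet]
  have hRpsd : R.PosSemidef := by
    simpa only [hR, hS.1.inv.eq] using hB.posSemidef.conjTranspose_mul_mul_same S⁻¹
  have hRZs : R *ᵥ (S *ᵥ Zs) = lmin • (S *ᵥ Zs) := by
    rw [hZs, mulVec_smul, mulVec_mulVec, mul_nonsing_inv S hSdet, one_mulVec, mulVec_smul, hweig,
      smul_comm]
  simp only [hA, hB', dotProduct_transpose_mul_mul_mulVec, one_mulVec] at hZA hZB
  exact hZB.not_ge (hRpsd.dotProduct_mulVec_le_of_isLeast hlmin hRZs hZA)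

/-- Let `A`, `B` be real symmetric positive definite `n × n` matrices,
`S = A^(1/2)` (so `A^(−1/2) = S⁻¹`), `w` a unit eigenvector of `R = A^(−1/2) B A^(−1/2)`
corresponding to its smallest eigenvalue `lmin`, `β ≠ 0`, and `Z⋆ = β · A^(−1/2) w`.
Then `Z⋆` is Pareto optimal for simultaneously maximizing `ZᵀAZ` and minimizing
`ZᵀBZ`: no `Z` satisfies `ZᵀAZ ≥ Z⋆ᵀAZ⋆` and `ZᵀBZ < Z⋆ᵀBZ⋆`. -/
theorem stmt_5 {n : ℕ} (A B : Matrix (Fin n) (Fin n) ℝ)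
    (hA : A.PosDef) (hB : B.PosDef)
    (S : Matrix (Fin n) (Fin n) ℝ) (hS : S.PosDef) (hSA : S * S = A)
    (R : Matrix (Fin n) (Fin n) ℝ) (hR : R = S⁻¹ * B * S⁻¹)
    (lmin : ℝ)
    (hlmin : IsLeast {μ : ℝ | ∃ v : Fin n → ℝ, v ≠ 0 ∧ R *ᵥ v = μ • v} lmin)
    (w : Fin n → ℝ) (hw : w ⬝ᵥ w = 1) (hweig : R *ᵥ w = lmin • w)
    (β : ℝ) (hβ : β ≠ 0)
    (Zs : Fin n → ℝ) (hZs : Zs = β • (S⁻¹ *ᵥ w)) :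
    ¬ ∃ Z : Fin n → ℝ,
        Zs ⬝ᵥ (A *ᵥ Zs) ≤ Z ⬝ᵥ (A *ᵥ Z) ∧ Z ⬝ᵥ (B *ᵥ Z) < Zs ⬝ᵥ (B *ᵥ Zs) :=
  stmt_5_general A B hB S hS hSA R hR lmin hlmin w hweig β Zs hZs
end

section
/- Let Z ∈ ℝ^N with Z ≠ 0 and let P > 0. Consider maximizing β over all (β, X₀, X₁) with X₁ − X₀ = β·Z, 𝟙ᵀ(X₀ + X₁) = P, X₀ ≥ 0, X₁ ≥ 0. The maximum value is β* = P / (Σᵢ |Zᵢ|), attained at X₁ = β*·Z⁺ and X₀ = β*·Z⁻; that is, every feasible triple satisfies β ≤ P / (Σᵢ |Zᵢ|), and (β*, β*·Z⁻, β*·Z⁺) is feasible. -/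
open Finset

/-- Let `Z ∈ ℝ^N` with `Z ≠ 0` and `P > 0`. Over all `(β, X₀, X₁)` with
`X₁ − X₀ = β·Z`, `𝟙ᵀ(X₀ + X₁) = P`, `X₀ ≥ 0`, `X₁ ≥ 0`, the maximum value of `β` is
`β⋆ = P / Σᵢ |Zᵢ|`, attained at `X₁ = β⋆·Z⁺`, `X₀ = β⋆·Z⁻`: every feasible triple has
`β ≤ β⋆`, and `(β⋆, β⋆·Z⁻, β⋆·Z⁺)` is feasible. -/
theorem stmt_11 {N : ℕ} (Z : Fin N → ℝ) (hZ : Z ≠ 0) (P : ℝ) (hP : 0 < P)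
    (βs : ℝ) (hβs : βs = P / ∑ i, |Z i|) :
    (∀ (β : ℝ) (X₀ X₁ : Fin N → ℝ), X₁ - X₀ = β • Z → ∑ i, (X₀ i + X₁ i) = P →
      (∀ i, 0 ≤ X₀ i) → (∀ i, 0 ≤ X₁ i) → β ≤ βs) ∧
    ((fun i => βs * max (Z i) 0) - (fun i => βs * max (-Z i) 0) = βs • Z ∧
      ∑ i, (βs * max (-Z i) 0 + βs * max (Z i) 0) = P ∧
      (∀ i, 0 ≤ βs * max (-Z i) 0) ∧ (∀ i, 0 ≤ βs * max (Z i) 0)) := by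
  have hSnn : 0 ≤ ∑ i, |Z i| := Finset.sum_nonneg fun i _ => abs_nonneg _
  have hSpos : 0 < ∑ i, |Z i| := by
    rcases hSnn.lt_or_eq with h | h
    · exact h
    · exfalso
      apply hZ
      funext i
      have := (Finset.sum_eq_zero_iff_of_nonneg (fun i _ => abs_nonneg (Z i))).mp h.symm i (mem_univ i)
      simpa [abs_eq_zero] using this
  have hβpos : 0 < βs := hβs ▸ div_pos hP hSpos
  constructor
  · intro β X₀ X₁ hdiff hsum h0 h1
    have key : ∀ i, |β| * |Z i| ≤ X₀ i + X₁ i := by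
      intro i
      have : β * Z i = X₁ i - X₀ i := by
        have := congrFun hdiff i; simpa using this.symm
      calc |β| * |Z i| = |X₁ i - X₀ i| := by rw [← abs_mul, this]
        _ ≤ X₀ i + X₁ i :=
          abs_sub_le_iff.mpr ⟨by linarith [h0 i], by linarith [h1 i]⟩
    have hle : β * ∑ i, |Z i| ≤ P := by
      calc β * ∑ i, |Z i| ≤ |β| * ∑ i, |Z i| := by
            exact mul_le_mul_of_nonneg_right (le_abs_self β) hSnn
        _ = ∑ i, |β| * |Z i| := Finset.mul_sum _ _ _
        _ ≤ ∑ i, (X₀ i + X₁ i) := Finset.sum_le_sum fun i _ => key i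
        _ = P := hsum
    rw [hβs, le_div_iff₀ hSpos]
    exact hle
  · refine ⟨?_, ?_, fun i => mul_nonneg hβpos.le (le_max_right _ _),
      fun i => mul_nonneg hβpos.le (le_max_right _ _)⟩
    · funext i
      simp only [Pi.sub_apply, Pi.smul_apply, smul_eq_mul]
      rw [← mul_sub]
      congr 1
      rcases le_total (Z i) 0 with h | h <;> simp [max_eq_left, max_eq_right, h]
    · have : ∀ i, βs * max (-Z i) 0 + βs * max (Z i) 0 = βs * |Z i| := by
        intro i
        rw [← mul_add]
        congr 1
        rcases le_total (Z i) 0 with h | h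
        · rw [abs_of_nonpos h]; simp [max_eq_left, max_eq_right, h, neg_nonneg.mpr h]
        · rw [abs_of_nonneg h]; simp [max_eq_right h, neg_nonpos.mpr h, max_eq_left]
          linarith
      rw [Finset.sum_congr rfl fun i _ => this i, ← Finset.mul_sum, hβs,
        div_mul_cancel₀ _ hSpos.ne']
end
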